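/- For a, b ∈ ℝ and τ in the upper half-plane, g_{a,b}(τ+1) = e^{-πia(a+1)} g_{a, a+b+1/2}(τ). -/
import Mathlib


open Complex

/-- The weight 3/2 theta function `g_{a,b}(τ) = ∑_{ν ∈ a + ℤ} ν e^{πiν²τ + 2πiνb}`. -/
noncomputable def thetaG (a b : ℝ) (τ : ℂ) : ℂ :=
  ∑' n : ℤ, ((a : ℂ) + (n : ℂ))
    * Complex.exp ((Real.pi : ℂ) * I * ((a : ℂ) + (n : ℂ)) ^ 2 * τ
      + 2 * (Real.pi : ℂ) * I * ((a : ℂ) + (n : ℂ)) * (b : ℂ))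

/-- `g_{a,b}(τ+1) = e^{-πia(a+1)} g_{a, a+b+1/2}(τ)`. -/
theorem thetaG_T_transform (a b : ℝ) (τ : ℂ) (hτ : 0 < τ.im) :
    thetaG a b (τ + 1)
      = Complex.exp (-(Real.pi : ℂ) * I * (a : ℂ) * ((a : ℂ) + 1))
        * thetaG a (a + b + 1 / 2) τ := by
  unfold thetaG
  rw [← tsum_mul_left]
  congr 1
  funext n
  obtain ⟨m, hm⟩ : Even ((n - 1) * n) := by
    simpa using Int.even_mul_succ_self (n - 1)
  have hC : (n : ℂ) * ((n : ℂ) - 1) = 2 * (m : ℂ) := by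
    have h := congrArg (fun k : ℤ => (k : ℂ)) hm
    push_cast at h
    linear_combination h
  have key : (Real.pi : ℂ) * I * ((a : ℂ) + (n : ℂ)) ^ 2 * (τ + 1)
      + 2 * (Real.pi : ℂ) * I * ((a : ℂ) + (n : ℂ)) * (b : ℂ)
      = ((Real.pi : ℂ) * I * ((a : ℂ) + (n : ℂ)) ^ 2 * τ
        + 2 * (Real.pi : ℂ) * I * ((a : ℂ) + (n : ℂ)) * ((a : ℝ) + (b : ℝ) + 1 / 2 : ℝ)
        + -(Real.pi : ℂ) * I * (a : ℂ) * ((a : ℂ) + 1))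
        + (m : ℂ) * (2 * (Real.pi : ℂ) * I) := by
    push_cast
    linear_combination (Real.pi : ℂ) * I * hC
  rw [key, Complex.exp_add, Complex.exp_add, Complex.exp_int_mul_two_pi_mul_I]
  ring
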